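/- For every nonnegative integer n, define S_m = ∑_{a+b=m} C_{2a} · B_{2b} (sum over pairs of nonnegative integers (a, b) with a + b = m). Then S_0 = 1 and ∑_{i+j=n} S_i · S_j = 16^n (sum over pairs of nonnegative integers (i, j) with i + j = n). -/

import Mathlib

/-!
Write `B = ∑ B_n Xⁿ` and `C = ∑ C_n Xⁿ`. From `(1 - 4X) B' = 2B` one gets `(1 - 4X) B² = 1`;
since also `(1 - 2XC)² = 1 - 4X` by Segner's recurrence, `B (1 - 2XC) = 1`. The series
`∑ S_m X^{2m}` is the product of the even parts `(C(X) + C(-X))/2` and `(B(X) + B(-X))/2`,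
and these two relations turn it into `B(X) B(-X)`, whose square is `1/((1 - 4X)(1 + 4X))`.
Hence `(∑ S_m Xᵐ)² = 1/(1 - 16X)`.
-/

def S (m : ℕ) : ℕ :=
  ∑ ab ∈ Finset.HasAntidiagonal.antidiagonal m, catalan (2 * ab.1) * Nat.centralBinom (2 * ab.2)

open Nat

namespace PowerSeries

instance {R : Type*} [Semiring R] [CharZero R] : CharZero R⟦X⟧ where
  cast_injective m n h := by simpa using congrArg (coeff 0) h

variable {R : Type*} [CommRing R]

@[simp]
theorem coeff_ofNat_mul (a : ℕ) [a.AtLeastTwo] (f : R⟦X⟧) (n : ℕ) :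
    coeff n (ofNat(a) * f) = ofNat(a) * coeff n f := by
  rw [← map_ofNat C a, coeff_C_mul]

theorem expand_injective (p : ℕ) (hp : p ≠ 0) :
    Function.Injective (expand p hp : R⟦X⟧ → R⟦X⟧) := by
  intro f g h
  ext n
  simpa using congrArg (coeff (p * n)) h

theorem one_sub_C_mul_X_mul_mk_pow (a : R) : (1 - C a * X) * mk (a ^ ·) = 1 := by
  have h : rescale a (mk 1) = mk (a ^ ·) := by
    ext n
    simp [coeff_rescale]
  simpa [h, mul_comm] using congrArg (rescale a) (mk_one_mul_one_sub_eq_one (S := R))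

noncomputable def evenCoeffs (f : R⟦X⟧) : R⟦X⟧ := mk fun n => coeff (2 * n) f

theorem two_mul_expand_evenCoeffs (f : R⟦X⟧) :
    2 * expand 2 two_ne_zero (evenCoeffs f) = f + evalNegHom f := by
  ext n
  obtain ⟨k, rfl | rfl⟩ := Nat.even_or_odd' n
  · simp [evenCoeffs, evalNegHom, coeff_rescale, pow_mul]
    ring
  · simp [evalNegHom, coeff_rescale, coeff_expand_of_not_dvd, pow_succ, pow_mul]

theorem map_catalanSeries_sq_mul_X_add_one :
    catalanSeries.map (Nat.castRingHom R) ^ 2 * X + 1 = catalanSeries.map (Nat.castRingHom R) := by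
  simpa using congrArg (map (Nat.castRingHom R)) catalanSeries_sq_mul_X_add_one

variable (R) in
noncomputable def centralBinomSeries : R⟦X⟧ := mk fun n => (centralBinom n : R)

theorem one_sub_four_X_mul_derivative_centralBinomSeries :
    (1 - 4 * X) * d⁄dX R (centralBinomSeries R) = 2 * centralBinomSeries R := by
  ext (_ | n)
  · rw [sub_mul, one_mul, map_sub, mul_assoc, coeff_ofNat_mul, coeff_zero_X_mul, coeff_derivative]
    simp [centralBinomSeries, centralBinom]
  · have h := congrArg (Nat.cast : ℕ → R) (succ_mul_centralBinom_succ (n + 1))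
    rw [sub_mul, one_mul, map_sub, mul_assoc, coeff_ofNat_mul, coeff_succ_X_mul,
      coeff_derivative, coeff_derivative]
    simp only [centralBinomSeries, coeff_mk, coeff_ofNat_mul]
    push_cast at h ⊢
    linear_combination h

theorem one_sub_four_X_mul_centralBinomSeries_sq [IsAddTorsionFree R] :
    (1 - 4 * X) * centralBinomSeries R ^ 2 = 1 := by
  apply derivative.ext
  · have hd : d⁄dX R (1 - 4 * X : R⟦X⟧) = -4 := by
      rw [← map_ofNat C 4]
      simp
    rw [Derivation.leibniz, Derivation.leibniz_pow, hd, Derivation.map_one_eq_zero]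
    simp only [smul_eq_mul, nsmul_eq_mul, Nat.cast_ofNat]
    linear_combination
      2 * centralBinomSeries R * one_sub_four_X_mul_derivative_centralBinomSeries (R := R)
  · simp [centralBinomSeries]

theorem centralBinomSeries_mul_one_sub_two_X_mul_catalanSeries [IsDomain R] [CharZero R] :
    centralBinomSeries R * (1 - 2 * X * catalanSeries.map (Nat.castRingHom R)) = 1 := by
  have hsq :
      (centralBinomSeries R * (1 - 2 * X * catalanSeries.map (Nat.castRingHom R))) ^ 2 = 1 := by
    linear_combination one_sub_four_X_mul_centralBinomSeries_sq (R := R) +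
      (4 * X * centralBinomSeries R ^ 2) * map_catalanSeries_sq_mul_X_add_one (R := R)
  refine (sq_eq_one_iff.mp hsq).resolve_right fun h => ?_
  have h0 := congrArg constantCoeff h
  simp [centralBinomSeries] at h0
  exact two_ne_zero (α := R) (by linear_combination h0)


theorem expand_evenCoeffs_catalanSeries_mul_evenCoeffs_centralBinomSeries
    [IsDomain R] [CharZero R] :
    expand 2 two_ne_zero
        (evenCoeffs (catalanSeries.map (Nat.castRingHom R)) * evenCoeffs (centralBinomSeries R)) =
      centralBinomSeries R * evalNegHom (centralBinomSeries R) := by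
  set c := catalanSeries.map (Nat.castRingHom R)
  set B := centralBinomSeries R
  have hc : c ^ 2 * X + 1 = c := map_catalanSeries_sq_mul_X_add_one
  have hB : B * (1 - 2 * X * c) = 1 := centralBinomSeries_mul_one_sub_two_X_mul_catalanSeries
  have hc' : evalNegHom c ^ 2 * -X + 1 = evalNegHom c := by
    simpa [evalNegHom_X] using congrArg evalNegHom hc
  have hB' : evalNegHom B * (1 + 2 * X * evalNegHom c) = 1 := by
    simpa [evalNegHom_X, map_ofNat] using congrArg evalNegHom hB
  -- with `u = 1 - 2XC`, `v = 1 + 2XC(-X)`: `2X (C + C(-X)) = v - u`, `Bu = 1`, `B(-X) v = 1`,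
  -- and `v² - u² = 8X`
  have key : 2 * X * ((c + evalNegHom c) * (B + evalNegHom B)) =
      2 * X * (4 * (B * evalNegHom B)) := by
    linear_combination (1 - (1 + 2 * X * evalNegHom c) * B) * hB' +
      ((1 - 2 * X * c) * evalNegHom B - 1) * hB - 4 * X * B * evalNegHom B * (hc + hc')
  have h := mul_left_cancel₀ (by simp : (2 * X : R⟦X⟧) ≠ 0) key
  rw [← two_mul_expand_evenCoeffs c, ← two_mul_expand_evenCoeffs B, mul_mul_mul_comm,
    ← map_mul] at h
  refine mul_left_cancel₀ (show (4 : R⟦X⟧) ≠ 0 by norm_num) ?_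
  linear_combination h

theorem one_sub_sixteen_X_sq_mul_centralBinomSeries_mul_evalNegHom_sq [IsAddTorsionFree R] :
    (1 - 16 * X ^ 2) * (centralBinomSeries R * evalNegHom (centralBinomSeries R)) ^ 2 = 1 := by
  have h := one_sub_four_X_mul_centralBinomSeries_sq (R := R)
  have h' := congrArg evalNegHom h
  simp only [map_mul, map_sub, map_one, map_pow, map_ofNat, evalNegHom_X] at h'
  linear_combination (1 + 4 * X) * evalNegHom (centralBinomSeries R) ^ 2 * h + h'

end PowerSeries

open PowerSeries

variable {R : Type*} [CommRing R]

variable (R) in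
noncomputable def sSeries : R⟦X⟧ := mk fun m => (S m : R)

theorem sSeries_eq_evenCoeffs_mul_evenCoeffs :
    sSeries R = evenCoeffs (catalanSeries.map (Nat.castRingHom R)) *
      evenCoeffs (centralBinomSeries R) := by
  ext m
  simp [sSeries, S, coeff_mul, evenCoeffs, centralBinomSeries]

theorem one_sub_sixteen_X_mul_sSeries_sq [IsDomain R] [CharZero R] :
    (1 - 16 * X) * sSeries R ^ 2 = 1 := by
  apply expand_injective 2 two_ne_zero
  rw [map_one, map_mul, map_pow, sSeries_eq_evenCoeffs_mul_evenCoeffs,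
    expand_evenCoeffs_catalanSeries_mul_evenCoeffs_centralBinomSeries]
  simpa [map_ofNat] using one_sub_sixteen_X_sq_mul_centralBinomSeries_mul_evalNegHom_sq (R := R)

theorem sSeries_sq [IsDomain R] [CharZero R] : sSeries R ^ 2 = mk (16 ^ ·) := by
  have h := one_sub_C_mul_X_mul_mk_pow (16 : R)
  rw [map_ofNat] at h
  linear_combination mk (16 ^ ·) * one_sub_sixteen_X_mul_sSeries_sq (R := R) - sSeries R ^ 2 * h

/-- With `S_m = ∑_{a+b=m} C_{2a} B_{2b}`, we have `S_0 = 1` and `∑_{i+j=n} S_i S_j = 16^n`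
for every nonnegative integer `n`. -/
theorem S_convolution (n : ℕ) :
    S 0 = 1 ∧ ∑ ij ∈ Finset.HasAntidiagonal.antidiagonal n, S ij.1 * S ij.2 = 16 ^ n := by
  refine ⟨by simp [S], ?_⟩
  have h := congrArg (coeff n) (sSeries_sq (R := ℤ))
  simp only [sq, coeff_mul, sSeries, coeff_mk] at h
  exact_mod_cast h
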